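/- arXiv:gr-qc/0604124 — 5 statements merged into one kernel-verified Lean document; each statement's English description precedes it below -/
import Mathlib

section
/- Let (C, ≺) be a causal set, A ⊆ C an antichain, and n ∈ ℕ. If x₁ ≺ x₂ ≺ ⋯ ≺ x_k is a chain (a totally ordered finite sequence) all of whose elements lie in the thickened antichain T_n(A), then k ≤ n. In particular T_n(A) contains no infinite ascending chains. -/
open Set

/-- Inclusive past of an element: `{y | y ≺ x or y = x}`. -/
def IPast {C : Type*} (r : C → C → Prop) (x : C) : Set C := {y | r y x ∨ y = x}

/-- Inclusive future of an element: `{y | x ≺ y or x = y}`. -/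
def IFut {C : Type*} (r : C → C → Prop) (x : C) : Set C := {y | r x y ∨ x = y}

/-- Inclusive future of a subset. -/
def IFutA {C : Type*} (r : C → C → Prop) (A : Set C) : Set C := ⋃ a ∈ A, IFut r a

/-- The thickened antichain `T_n(A)`. -/
def Thick {C : Type*} (r : C → C → Prop) (A : Set C) (n : ℕ) : Set C :=
  {p ∈ IFutA r A | (IPast r p ∩ IFutA r A).Finite ∧ (IPast r p ∩ IFutA r A).ncard ≤ n}


/-- Any chain `x₀ ≺ x₁ ≺ ⋯ ≺ x_{k-1}` lying in the thickened antichain `T_n(A)` has length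
`k ≤ n`; in particular `T_n(A)` contains no infinite ascending chains. -/
theorem chain_in_thickening_length_le {C : Type*} (r : C → C → Prop)
    (hirr : ∀ x, ¬ r x x)
    (htrans : ∀ x y z, r x y → r y z → r x z)
    (hlf : ∀ x y, {z | r x z ∧ r z y}.Finite)
    (A : Set C)
    (hanti : ∀ a ∈ A, ∀ b ∈ A, a ≠ b → ¬ r a b)
    (n : ℕ) :
    (∀ (k : ℕ) (x : ℕ → C),
      (∀ i, i + 1 < k → r (x i) (x (i + 1))) →
      (∀ i, i < k → x i ∈ Thick r A n) →
      k ≤ n) ∧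
    ¬ ∃ f : ℕ → C, (∀ i, f i ∈ Thick r A n) ∧ (∀ i, r (f i) (f (i + 1))) := by
  have main : ∀ (k : ℕ) (x : ℕ → C),
      (∀ i, i + 1 < k → r (x i) (x (i + 1))) →
      (∀ i, i < k → x i ∈ Thick r A n) → k ≤ n := by
    intro k x hchain hmem
    rcases Nat.eq_zero_or_pos k with hk | hk
    · omega
    -- chain monotonicity
    have mono : ∀ j, j < k → ∀ i, i < j → r (x i) (x j) := by
      intro j hj
      induction j with
      | zero => intro i hi; omega
      | succ m ih =>
        intro i hi
        have hm : r (x m) (x (m + 1)) := hchain m hj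
        rcases Nat.lt_succ_iff_lt_or_eq.mp hi with hi' | hi'
        · exact htrans _ _ _ (ih (by omega) i hi') hm
        · rw [hi']; exact hm
    set S := IPast r (x (k - 1)) ∩ IFutA r A with hS
    obtain ⟨hfut, hfin, hcard⟩ := hmem (k - 1) (by omega)
    -- all x i, i < k, lie in S
    have hsub : x '' Set.Iio k ⊆ S := by
      rintro _ ⟨i, hi', rfl⟩
      have hi : i < k := hi'
      refine ⟨?_, (hmem i hi).1⟩
      rcases Nat.lt_succ_iff_lt_or_eq.mp (by omega : i < (k - 1) + 1) with h | h
      · exact Or.inl (mono (k - 1) (by omega) i h)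
      · exact Or.inr (by rw [h])
    have hinj : Set.InjOn x (Set.Iio k) := by
      intro i hi j hj hij
      by_contra hne
      rcases Nat.lt_or_ge i j with h | h
      · exact hirr _ (hij ▸ mono j hj i h)
      · have : i > j := by omega
        exact hirr _ (hij ▸ mono i hi j this)
    have h1 : (x '' Set.Iio k).ncard = k := by
      rw [Set.ncard_image_of_injOn hinj,
        show (Set.Iio k) = ↑(Finset.Iio k) by simp, Set.ncard_coe_finset, Nat.card_Iio]
    calc k = (x '' Set.Iio k).ncard := h1.symm
      _ ≤ S.ncard := Set.ncard_le_ncard hsub hfin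
      _ ≤ n := hcard
  refine ⟨main, ?_⟩
  rintro ⟨f, hf, hc⟩
  have := main (n + 1) f (fun i _ => hc i) (fun i _ => hf i)
  omega
end

section
/- Let (C, ≺) be a causal set, A ⊆ C an antichain, and n ∈ ℕ. Then every element x of the thickened antichain T_n(A) lies at or below a maximal element of T_n(A): there exists m ∈ T_n(A) with x ≼ m such that no y ∈ T_n(A) satisfies m ≺ y. -/
open Set

lemma thick_aux {C : Type*} (r : C → C → Prop)
    (hirr : ∀ x, ¬ r x x)
    (htrans : ∀ x y z, r x y → r y z → r x z)
    (A : Set C) (n : ℕ) :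
    ∀ k x, x ∈ Thick r A n → n - (IPast r x ∩ IFutA r A).ncard ≤ k →
    ∃ m ∈ Thick r A n, (r x m ∨ x = m) ∧ ∀ y ∈ Thick r A n, ¬ r m y := by
  intro k
  induction k with
  | zero =>
    intro x hx hk
    by_cases hmax : ∀ y ∈ Thick r A n, ¬ r x y
    · exact ⟨x, hx, Or.inr rfl, hmax⟩
    · push_neg at hmax
      obtain ⟨y, hy, hxy⟩ := hmax
      exfalso
      have hsub : IPast r x ∩ IFutA r A ⊂ IPast r y ∩ IFutA r A := by
        constructor
        · rintro z ⟨hz1, hz2⟩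
          refine ⟨?_, hz2⟩
          rcases hz1 with h | h
          · exact Or.inl (htrans _ _ _ h hxy)
          · exact Or.inl (h ▸ hxy)
        · intro hcon
          have : y ∈ IPast r x ∩ IFutA r A := hcon ⟨Or.inr rfl, hy.1⟩
          rcases this.1 with h | h
          · exact hirr x (htrans _ _ _ hxy h)
          · exact hirr x (h ▸ hxy)
      have hlt := Set.ncard_lt_ncard hsub hy.2.1
      have h1 := hy.2.2
      omega
  | succ k ih =>
    intro x hx hk
    by_cases hmax : ∀ y ∈ Thick r A n, ¬ r x y
    · exact ⟨x, hx, Or.inr rfl, hmax⟩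
    · push_neg at hmax
      obtain ⟨y, hy, hxy⟩ := hmax
      have hsub : IPast r x ∩ IFutA r A ⊂ IPast r y ∩ IFutA r A := by
        constructor
        · rintro z ⟨hz1, hz2⟩
          refine ⟨?_, hz2⟩
          rcases hz1 with h | h
          · exact Or.inl (htrans _ _ _ h hxy)
          · exact Or.inl (h ▸ hxy)
        · intro hcon
          have : y ∈ IPast r x ∩ IFutA r A := hcon ⟨Or.inr rfl, hy.1⟩
          rcases this.1 with h | h
          · exact hirr x (htrans _ _ _ hxy h)
          · exact hirr x (h ▸ hxy)
      have hlt := Set.ncard_lt_ncard hsub hy.2.1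
      obtain ⟨m, hm, hym, hmmax⟩ := ih y hy (by omega)
      refine ⟨m, hm, ?_, hmmax⟩
      rcases hym with h | h
      · exact Or.inl (htrans _ _ _ hxy h)
      · exact Or.inl (h ▸ hxy)

/-- Every element of the thickened antichain `T_n(A)` lies at or below a maximal element
of `T_n(A)`. -/
theorem exists_maximal_above_in_thickening {C : Type*} (r : C → C → Prop)
    (hirr : ∀ x, ¬ r x x)
    (htrans : ∀ x y z, r x y → r y z → r x z)
    (hlf : ∀ x y, {z | r x z ∧ r z y}.Finite)
    (A : Set C)
    (hanti : ∀ a ∈ A, ∀ b ∈ A, a ≠ b → ¬ r a b)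
    (n : ℕ) (x : C) (hx : x ∈ Thick r A n) :
    ∃ m ∈ Thick r A n, (r x m ∨ x = m) ∧ ∀ y ∈ Thick r A n, ¬ r m y :=
  thick_aux r hirr htrans A n _ x hx le_rfl
end

section
/- Let (C, ≺) be a causal set, A ⊆ C an antichain, n ∈ ℕ, and let M be the set of maximal elements of the thickened antichain T_n(A). Then the collection of past sets {P_m = IPast(m) ∩ IFut(A) : m ∈ M} covers T_n(A), i.e. T_n(A) = ⋃_{m ∈ M} P_m. -/
open Set

lemma exists_maximal_above {C : Type*} (r : C → C → Prop)
    (hirr : ∀ x, ¬ r x x)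
    (htrans : ∀ x y z, r x y → r y z → r x z)
    (A : Set C) (n : ℕ) :
    ∀ k : ℕ, ∀ p ∈ Thick r A n, n - (IPast r p ∩ IFutA r A).ncard ≤ k →
      ∃ m ∈ Thick r A n, (∀ y ∈ Thick r A n, ¬ r m y) ∧ (r p m ∨ p = m) := by
  intro k
  induction k with
  | zero =>
    intro p hp hk
    refine ⟨p, hp, ?_, Or.inr rfl⟩
    intro y hy hry
    -- past of y strictly larger than past of p, but both ≤ n and past of p ≥ n
    have hfp : n ≤ (IPast r p ∩ IFutA r A).ncard := by omega
    have hsub : IPast r p ∩ IFutA r A ⊂ IPast r y ∩ IFutA r A := by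
      constructor
      · rintro z ⟨hz1, hz2⟩
        refine ⟨?_, hz2⟩
        rcases hz1 with h | h
        · exact Or.inl (htrans _ _ _ h hry)
        · exact Or.inl (h ▸ hry)
      · intro hcon
        have hy' : y ∈ IPast r p ∩ IFutA r A := hcon ⟨Or.inr rfl, hy.1⟩
        rcases hy'.1 with h | h
        · exact hirr p (htrans _ _ _ hry h)
        · exact hirr y (h ▸ hry)
    have := Set.ncard_lt_ncard hsub hy.2.1
    have := hy.2.2
    omega
  | succ k ih =>
    intro p hp hk
    by_cases hmax : ∀ y ∈ Thick r A n, ¬ r p y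
    · exact ⟨p, hp, hmax, Or.inr rfl⟩
    · push_neg at hmax
      obtain ⟨y, hy, hry⟩ := hmax
      have hsub : IPast r p ∩ IFutA r A ⊂ IPast r y ∩ IFutA r A := by
        constructor
        · rintro z ⟨hz1, hz2⟩
          refine ⟨?_, hz2⟩
          rcases hz1 with h | h
          · exact Or.inl (htrans _ _ _ h hry)
          · exact Or.inl (h ▸ hry)
        · intro hcon
          have hy' : y ∈ IPast r p ∩ IFutA r A := hcon ⟨Or.inr rfl, hy.1⟩
          rcases hy'.1 with h | h
          · exact hirr p (htrans _ _ _ hry h)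
          · exact hirr y (h ▸ hry)
      have hlt := Set.ncard_lt_ncard hsub hy.2.1
      obtain ⟨m, hm, hmmax, hym⟩ := ih y hy (by omega)
      refine ⟨m, hm, hmmax, ?_⟩
      rcases hym with h | h
      · exact Or.inl (htrans _ _ _ hry h)
      · exact Or.inl (h ▸ hry)

/-- The past sets `P_m = IPast(m) ∩ IFut(A)` of the maximal elements `m` of the thickened
antichain `T_n(A)` cover `T_n(A)`. -/
theorem past_sets_cover_thickening {C : Type*} (r : C → C → Prop)
    (hirr : ∀ x, ¬ r x x)
    (htrans : ∀ x y z, r x y → r y z → r x z)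
    (hlf : ∀ x y, {z | r x z ∧ r z y}.Finite)
    (A : Set C)
    (hanti : ∀ a ∈ A, ∀ b ∈ A, a ≠ b → ¬ r a b)
    (n : ℕ) :
    Thick r A n =
      ⋃ m ∈ {m ∈ Thick r A n | ∀ y ∈ Thick r A n, ¬ r m y},
        (IPast r m ∩ IFutA r A) := by
  ext p
  constructor
  · intro hp
    obtain ⟨m, hm, hmmax, hpm⟩ :=
      exists_maximal_above r hirr htrans A n n p hp (by omega)
    exact Set.mem_biUnion ⟨hm, hmmax⟩ ⟨hpm, hp.1⟩
  · intro hp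
    simp only [Set.mem_iUnion] at hp
    obtain ⟨m, hm, hpm⟩ := hp
    have hsub : IPast r p ∩ IFutA r A ⊆ IPast r m ∩ IFutA r A := by
      rintro z ⟨hz1, hz2⟩
      refine ⟨?_, hz2⟩
      rcases hpm.1 with h | h
      · rcases hz1 with h' | h'
        · exact Or.inl (htrans _ _ _ h' h)
        · exact Or.inl (h' ▸ h)
      · exact h ▸ hz1
    exact ⟨hpm.2, hm.1.2.1.subset hsub,
      le_trans (Set.ncard_le_ncard hsub hm.1.2.1) hm.1.2.2⟩
end

section
/- Let (C, ≺) be a causal set, A ⊆ C an inextendible antichain, n ≥ 1 a natural number, and let M be the set of maximal elements of the thickened antichain T_n(A). Then the collection of shadows {A_m = IPast(m) ∩ A : m ∈ M} covers A, i.e. A = ⋃_{m ∈ M} A_m. -/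
open Set

lemma past_fut_of_antichain {C : Type*} (r : C → C → Prop)
    (hirr : ∀ x, ¬ r x x)
    (htrans : ∀ x y z, r x y → r y z → r x z)
    (A : Set C)
    (hanti : ∀ a ∈ A, ∀ b ∈ A, a ≠ b → ¬ r a b)
    {b : C} (hb : b ∈ A) : IPast r b ∩ IFutA r A = {b} := by
  ext y
  constructor
  · rintro ⟨hy1, hy2⟩
    rcases hy1 with hy1 | rfl
    · exfalso
      rcases mem_iUnion₂.mp hy2 with ⟨a', ha', ha'y⟩
      rcases ha'y with ha'y | rfl
      · have hab : r a' b := htrans _ _ _ ha'y hy1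
        rcases eq_or_ne a' b with rfl | hne
        · exact hirr _ hab
        · exact hanti a' ha' b hb hne hab
      · rcases eq_or_ne a' b with rfl | hne
        · exact hirr _ hy1
        · exact hanti a' ha' b hb hne hy1
    · rfl
  · rintro rfl
    exact ⟨Or.inr rfl, mem_iUnion₂.mpr ⟨_, hb, Or.inr rfl⟩⟩

lemma past_ssubset {C : Type*} (r : C → C → Prop)
    (hirr : ∀ x, ¬ r x x)
    (htrans : ∀ x y z, r x y → r y z → r x z)
    (A : Set C) (n : ℕ)
    {p y : C} (hy : y ∈ Thick r A n) (hpy : r p y) :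
    IPast r p ∩ IFutA r A ⊂ IPast r y ∩ IFutA r A := by
  constructor
  · rintro z ⟨hz1, hz2⟩
    refine ⟨?_, hz2⟩
    rcases hz1 with hz1 | rfl
    · exact Or.inl (htrans _ _ _ hz1 hpy)
    · exact Or.inl hpy
  · intro hsub
    have hyin : y ∈ IPast r y ∩ IFutA r A := ⟨Or.inr rfl, hy.1⟩
    have := hsub hyin
    rcases this.1 with h | rfl
    · exact hirr _ (htrans _ _ _ hpy h)
    · exact hirr _ hpy

/-- For an inextendible antichain `A` and `n ≥ 1`, the shadows `A_m = IPast(m) ∩ A` of the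
maximal elements `m` of the thickened antichain `T_n(A)` cover `A`. -/
theorem shadows_cover_antichain {C : Type*} (r : C → C → Prop)
    (hirr : ∀ x, ¬ r x x)
    (htrans : ∀ x y z, r x y → r y z → r x z)
    (hlf : ∀ x y, {z | r x z ∧ r z y}.Finite)
    (A : Set C)
    (hanti : ∀ a ∈ A, ∀ b ∈ A, a ≠ b → ¬ r a b)
    (hinext : ∀ x : C, ∃ a ∈ A, r x a ∨ r a x ∨ x = a)
    (n : ℕ) (hn : 1 ≤ n) :
    A = ⋃ m ∈ {m ∈ Thick r A n | ∀ y ∈ Thick r A n, ¬ r m y}, (IPast r m ∩ A) := by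
  have key : ∀ k : ℕ, ∀ p, p ∈ Thick r A n →
      n - (IPast r p ∩ IFutA r A).ncard ≤ k →
      ∃ m ∈ Thick r A n, (∀ y ∈ Thick r A n, ¬ r m y) ∧ (r p m ∨ p = m) := by
    intro k
    induction k with
    | zero =>
      intro p hp hle
      by_cases hmax : ∀ y ∈ Thick r A n, ¬ r p y
      · exact ⟨p, hp, hmax, Or.inr rfl⟩
      · push_neg at hmax
        obtain ⟨y, hy, hpy⟩ := hmax
        exfalso
        have hlt := Set.ncard_lt_ncard (past_ssubset r hirr htrans A n hy hpy) hy.2.1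
        have h1 := hp.2.2
        have h2 := hy.2.2
        omega
    | succ k ih =>
      intro p hp hle
      by_cases hmax : ∀ y ∈ Thick r A n, ¬ r p y
      · exact ⟨p, hp, hmax, Or.inr rfl⟩
      · push_neg at hmax
        obtain ⟨y, hy, hpy⟩ := hmax
        have hlt := Set.ncard_lt_ncard (past_ssubset r hirr htrans A n hy hpy) hy.2.1
        obtain ⟨m, hm, hmmax, hym⟩ := ih y hy (by omega)
        refine ⟨m, hm, hmmax, Or.inl ?_⟩
        rcases hym with h | rfl
        · exact htrans _ _ _ hpy h
        · exact hpy
  ext a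
  simp only [mem_iUnion, exists_prop, Set.mem_setOf_eq]
  constructor
  · intro ha
    have hpast := past_fut_of_antichain r hirr htrans A hanti ha
    have haT : a ∈ Thick r A n := by
      refine ⟨mem_iUnion₂.mpr ⟨a, ha, Or.inr rfl⟩, ?_, ?_⟩
      · rw [hpast]; exact Set.finite_singleton a
      · rw [hpast, Set.ncard_singleton]; exact hn
    obtain ⟨m, hm, hmmax, ham⟩ := key n a haT (by omega)
    refine ⟨m, ⟨hm, hmmax⟩, ?_, ha⟩
    rcases ham with h | rfl
    · exact Or.inl h
    · exact Or.inr rfl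
  · rintro ⟨m, _, _, ha⟩
    exact ha
end

section
/- Let (C, ≺) be a causal set, A ⊆ C an inextendible antichain, n ∈ ℕ, and let M be the set of maximal elements of the thickened antichain T_n(A). For every nonempty finite subset S ⊆ M, the intersection of past sets ⋂_{m ∈ S} P_m is nonempty if and only if the intersection of shadows ⋂_{m ∈ S} A_m is nonempty; indeed (⋂_{m ∈ S} P_m) ∩ A = ⋂_{m ∈ S} A_m, and if ⋂_{m ∈ S} P_m ≠ ∅ then it contains an element of A. (Thus the map Ψ* sending each simplex of the nerve N({P_m}) to the corresponding simplex of the nerve N({A_m}) is a bijection between the two nerve simplicial complexes.) -/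
open Set

/-- For an inextendible antichain `A` and a nonempty finite set `S` of maximal elements of the
thickened antichain `T_n(A)`: the intersection of the past sets `P_m` meets `A` exactly in the
intersection of the shadows `A_m`; the former is nonempty iff the latter is; and if the
intersection of the past sets is nonempty then it contains an element of `A`.  (Hence the
nerves of the two covers are isomorphic.) -/
theorem past_set_nerve_iso_shadow_nerve {C : Type*} (r : C → C → Prop)
    (hirr : ∀ x, ¬ r x x)
    (htrans : ∀ x y z, r x y → r y z → r x z)
    (hlf : ∀ x y, {z | r x z ∧ r z y}.Finite)
    (A : Set C)
    (hanti : ∀ a ∈ A, ∀ b ∈ A, a ≠ b → ¬ r a b)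
    (hinext : ∀ x : C, ∃ a ∈ A, r x a ∨ r a x ∨ x = a)
    (n : ℕ)
    (S : Finset C) (hSne : S.Nonempty)
    (hS : ∀ m ∈ S, m ∈ Thick r A n ∧ ∀ y ∈ Thick r A n, ¬ r m y) :
    ((⋂ m ∈ S, (IPast r m ∩ IFutA r A)) ∩ A = ⋂ m ∈ S, (IPast r m ∩ A)) ∧
    ((⋂ m ∈ S, (IPast r m ∩ IFutA r A)).Nonempty ↔ (⋂ m ∈ S, (IPast r m ∩ A)).Nonempty) ∧
    ((⋂ m ∈ S, (IPast r m ∩ IFutA r A)).Nonempty →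
      ∃ a ∈ A, a ∈ ⋂ m ∈ S, (IPast r m ∩ IFutA r A)) := by

  have hAsub : ∀ a ∈ A, a ∈ IFutA r A := fun a ha =>
    Set.mem_biUnion ha (Or.inr rfl)
  have key : ∀ p ∈ (⋂ m ∈ S, (IPast r m ∩ IFutA r A)),
      ∃ a ∈ A, a ∈ ⋂ m ∈ S, (IPast r m ∩ IFutA r A) := by
    intro p hp
    obtain ⟨m0, hm0⟩ := hSne
    have hpm0 := (Set.mem_iInter₂.1 hp) m0 hm0
    obtain ⟨a, ha, hap⟩ := Set.mem_iUnion₂.1 hpm0.2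
    refine ⟨a, ha, Set.mem_iInter₂.2 fun m hm => ?_⟩
    have hpm := (Set.mem_iInter₂.1 hp) m hm
    refine ⟨?_, hAsub a ha⟩
    rcases hap with h1 | h1 <;> rcases hpm.1 with h2 | h2
    · exact Or.inl (htrans a p m h1 h2)
    · subst h2; exact Or.inl h1
    · subst h1; exact Or.inl h2
    · subst h1; exact Or.inr h2
  have heq : (⋂ m ∈ S, (IPast r m ∩ IFutA r A)) ∩ A = ⋂ m ∈ S, (IPast r m ∩ A) := by
    ext x
    constructor
    · rintro ⟨hx, hxA⟩
      exact Set.mem_iInter₂.2 fun m hm => ⟨((Set.mem_iInter₂.1 hx) m hm).1, hxA⟩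
    · intro hx
      obtain ⟨m0, hm0⟩ := hSne
      have hxA := ((Set.mem_iInter₂.1 hx) m0 hm0).2
      exact ⟨Set.mem_iInter₂.2 fun m hm =>
        ⟨((Set.mem_iInter₂.1 hx) m hm).1, hAsub x hxA⟩, hxA⟩
  refine ⟨heq, ?_, fun ⟨p, hp⟩ => key p hp⟩
  constructor
  · rintro ⟨p, hp⟩
    obtain ⟨a, ha, haI⟩ := key p hp
    exact ⟨a, heq ▸ ⟨haI, ha⟩⟩
  · rintro ⟨x, hx⟩
    obtain ⟨m0, hm0⟩ := hSne
    have hxA := ((Set.mem_iInter₂.1 hx) m0 hm0).2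
    exact ⟨x, Set.mem_iInter₂.2 fun m hm =>
      ⟨((Set.mem_iInter₂.1 hx) m hm).1, hAsub x hxA⟩⟩
end
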